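/- The simplex integral satisfies the recursion A(M, m, 1, x, y) = B(x, (M−1)x + y + 1) · A(M−1, m−1, 1, x, y) for 1 ≤ m ≤ M, M ≥ 2, x > 0, y ≥ 0, where B denotes the Beta function. -/

import Mathlib

open MeasureTheory Real

/-- The simplex integral `A(M, m, ρ, x, y)`. -/
noncomputable def simplexIntegral (M m : ℕ) (ρ x y : ℝ) : ℝ :=
  ∫ s : Fin M → ℝ in {s : Fin M → ℝ | (∀ i, 0 ≤ s i) ∧ ∑ i, s i ≤ ρ},
    (∏ i, (s i) ^ (x - 1)) *
      (ρ - ∑ j ∈ Finset.univ.filter (fun j : Fin M => (j : ℕ) < m), s j) ^ y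

/-- The Beta function `B(a, b) = ∫_0^1 s^{a-1} (1-s)^{b-1} ds`. -/
noncomputable def betaFn (a b : ℝ) : ℝ :=
  ∫ s in (0 : ℝ)..1, s ^ (a - 1) * (1 - s) ^ (b - 1)

/-!
Split off the first coordinate `u`. The fibre of the simplex `{s ≥ 0, ∑ s ≤ 1}` over `u` is the
simplex of radius `1 - u` in the remaining `M - 1` coordinates, and the integrand factors as
`u ^ (x - 1)` times the same integrand at radius `1 - u`. Rescaling that simplex to radius `1`
produces the factor `(1 - u) ^ ((M - 1) x + y)` (Jacobian `(1 - u) ^ (M - 1)`, homogeneity of degree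
`(M - 1)(x - 1) + y`), and the remaining integral over `u` is the Beta integral.
Everything is done with lower Lebesgue integrals, where Tonelli and the change of variables need
no integrability; the real integrals are their `toReal`s.
-/

open Set
open scoped ENNReal

theorem lintegral_eq_ofReal_abs_pow_mul_lintegral_comp_smul {E : Type*} [NormedAddCommGroup E]
    [NormedSpace ℝ E] [MeasurableSpace E] [BorelSpace E] [FiniteDimensional ℝ E]
    (μ : Measure E) [μ.IsAddHaarMeasure] (f : E → ℝ≥0∞) {c : ℝ} (hc : c ≠ 0) :
    ∫⁻ x, f x ∂μ = ENNReal.ofReal |c ^ Module.finrank ℝ E| * ∫⁻ x, f (c • x) ∂μ := by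
  have h : ∫⁻ x, f (c • x) ∂μ = ∫⁻ x, f x ∂(Measure.map (c • ·) μ) :=
    (lintegral_map_equiv f (Homeomorph.smulOfNeZero c hc).toMeasurableEquiv).symm
  rw [h, Measure.map_addHaar_smul μ hc, lintegral_smul_measure, smul_eq_mul, ← mul_assoc,
    ← ENNReal.ofReal_mul (abs_nonneg _), ← abs_mul, mul_inv_cancel₀ (pow_ne_zero _ hc), abs_one,
    ENNReal.ofReal_one, one_mul]

theorem lintegral_fin_succ_eq_lintegral_lintegral_cons {α : Type*} [MeasureSpace α]
    [SigmaFinite (volume : Measure α)] {n : ℕ} {f : (Fin (n + 1) → α) → ℝ≥0∞}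
    (hf : Measurable f) :
    ∫⁻ s, f s = ∫⁻ u, ∫⁻ t : Fin n → α, f (Fin.cons u t) := by
  have e := (volume_preserving_piFinSuccAbove (fun _ : Fin (n + 1) => α) 0).symm
  rw [← e.lintegral_comp_emb (MeasurableEquiv.measurableEmbedding _), Measure.volume_eq_prod]
  refine (lintegral_prod _ (hf.comp (MeasurableEquiv.measurable _)).aemeasurable).trans ?_
  simp [MeasurableEquiv.piFinSuccAbove_symm_apply, Fin.insertNthEquiv]

theorem betaFn_eq_toReal_lintegral (a b : ℝ) :
    betaFn a b = (∫⁻ u in Ioo 0 1, ENNReal.ofReal (u ^ (a - 1) * (1 - u) ^ (b - 1))).toReal := by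
  rw [betaFn, intervalIntegral.integral_of_le zero_le_one, integral_Ioc_eq_integral_Ioo]
  exact integral_eq_lintegral_of_nonneg_ae
    (ae_restrict_of_forall_mem measurableSet_Ioo fun u hu =>
      mul_nonneg (rpow_nonneg hu.1.le _) (rpow_nonneg (sub_pos.2 hu.2).le _))
    (by fun_prop)

def solidSimplex (n : ℕ) (ρ : ℝ) : Set (Fin n → ℝ) :=
  {s | (∀ i, 0 ≤ s i) ∧ ∑ i, s i ≤ ρ}

noncomputable def simplexIntegrand (n m : ℕ) (ρ x y : ℝ) (s : Fin n → ℝ) : ℝ :=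
  (∏ i, s i ^ (x - 1)) * (ρ - ∑ j ∈ Finset.univ.filter (fun j : Fin n => (j : ℕ) < m), s j) ^ y

noncomputable def simplexLIntegral (n m : ℕ) (ρ x y : ℝ) : ℝ≥0∞ :=
  ∫⁻ s in solidSimplex n ρ, ENNReal.ofReal (simplexIntegrand n m ρ x y s)

section Simplex

variable {n m k : ℕ} {ρ x y : ℝ}

theorem measurableSet_solidSimplex : MeasurableSet (solidSimplex n ρ) := by
  simp only [solidSimplex, ofPred_and, ofPred_forall]
  exact (MeasurableSet.iInter fun i =>
    measurableSet_le measurable_const (measurable_pi_apply i)).inter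
      (measurableSet_le (by fun_prop) measurable_const)

theorem measurable_simplexIntegrand : Measurable (simplexIntegrand n m ρ x y) := by
  unfold simplexIntegrand
  fun_prop

theorem sub_sum_filter_nonneg_of_mem_solidSimplex {s : Fin n → ℝ} (hs : s ∈ solidSimplex n ρ) :
    0 ≤ ρ - ∑ j ∈ Finset.univ.filter (fun j : Fin n => (j : ℕ) < m), s j := by
  have := Finset.sum_le_sum_of_subset_of_nonneg
    (Finset.filter_subset (fun j : Fin n => (j : ℕ) < m) Finset.univ) fun i _ _ => hs.1 i
  linarith [hs.2]

theorem simplexIntegrand_nonneg {s : Fin n → ℝ} (hs : s ∈ solidSimplex n ρ) :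
    0 ≤ simplexIntegrand n m ρ x y s :=
  mul_nonneg (Finset.prod_nonneg fun i _ => rpow_nonneg (hs.1 i) _)
    (rpow_nonneg (sub_sum_filter_nonneg_of_mem_solidSimplex hs) _)

theorem simplexIntegral_eq_toReal_simplexLIntegral :
    simplexIntegral n m ρ x y = (simplexLIntegral n m ρ x y).toReal :=
  integral_eq_lintegral_of_nonneg_ae
    (ae_restrict_of_forall_mem measurableSet_solidSimplex fun _ hs => simplexIntegrand_nonneg hs)
    measurable_simplexIntegrand.aestronglyMeasurable

theorem smul_mem_solidSimplex_iff {c : ℝ} (hc : 0 < c) {s : Fin n → ℝ} :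
    c • s ∈ solidSimplex n (c * ρ) ↔ s ∈ solidSimplex n ρ := by
  simp only [solidSimplex, mem_ofPred_eq, Pi.smul_apply, smul_eq_mul, ← Finset.mul_sum,
    mul_nonneg_iff_of_pos_left hc, mul_le_mul_iff_right₀ hc]

theorem simplexIntegrand_smul {c : ℝ} (hc : 0 < c) {s : Fin n → ℝ} (hs : s ∈ solidSimplex n ρ) :
    simplexIntegrand n m (c * ρ) x y (c • s)
      = c ^ (n * (x - 1) + y) * simplexIntegrand n m ρ x y s := by
  have hprod : ∏ i, (c • s) i ^ (x - 1) = c ^ (n * (x - 1)) * ∏ i, s i ^ (x - 1) := by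
    simp only [Pi.smul_apply, smul_eq_mul, mul_rpow hc.le (hs.1 _), Finset.prod_mul_distrib,
      Finset.prod_const, Finset.card_univ, Fintype.card_fin, ← rpow_natCast, ← rpow_mul hc.le,
      mul_comm (x - 1)]
  have hrem : c * ρ - ∑ j ∈ Finset.univ.filter (fun j : Fin n => (j : ℕ) < m), (c • s) j
      = c * (ρ - ∑ j ∈ Finset.univ.filter (fun j : Fin n => (j : ℕ) < m), s j) := by
    simp only [Pi.smul_apply, smul_eq_mul, ← Finset.mul_sum, mul_sub]
  rw [simplexIntegrand, simplexIntegrand, hprod, hrem,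
    mul_rpow hc.le (sub_sum_filter_nonneg_of_mem_solidSimplex hs), rpow_add hc]
  ring

theorem simplexLIntegral_mul {c : ℝ} (hc : 0 < c) :
    simplexLIntegral n m (c * ρ) x y
      = ENNReal.ofReal (c ^ (n * x + y)) * simplexLIntegral n m ρ x y := by
  have hpoint : ∀ w, (solidSimplex n (c * ρ)).indicator
      (fun s => ENNReal.ofReal (simplexIntegrand n m (c * ρ) x y s)) (c • w)
      = ENNReal.ofReal (c ^ (n * (x - 1) + y)) * (solidSimplex n ρ).indicator
        (fun s => ENNReal.ofReal (simplexIntegrand n m ρ x y s)) w := by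
    intro w
    by_cases hw : w ∈ solidSimplex n ρ
    · rw [indicator_of_mem ((smul_mem_solidSimplex_iff hc).2 hw), indicator_of_mem hw,
        simplexIntegrand_smul hc hw, ENNReal.ofReal_mul (rpow_nonneg hc.le _)]
    · rw [indicator_of_notMem (mt (smul_mem_solidSimplex_iff hc).1 hw), indicator_of_notMem hw,
        mul_zero]
  rw [simplexLIntegral, simplexLIntegral, ← lintegral_indicator measurableSet_solidSimplex,
    ← lintegral_indicator measurableSet_solidSimplex,
    lintegral_eq_ofReal_abs_pow_mul_lintegral_comp_smul volume _ hc.ne']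
  simp_rw [hpoint]
  have hexp : (n : ℝ) + (n * (x - 1) + y) = n * x + y := by ring
  rw [lintegral_const_mul' _ _ ENNReal.ofReal_ne_top, ← mul_assoc, Module.finrank_fin_fun,
    abs_of_pos (pow_pos hc n), ← ENNReal.ofReal_mul (pow_nonneg hc.le n), ← rpow_natCast,
    ← rpow_add hc, hexp]

theorem cons_mem_solidSimplex_iff {u : ℝ} {t : Fin n → ℝ} :
    (Fin.cons u t : Fin (n + 1) → ℝ) ∈ solidSimplex (n + 1) ρ
      ↔ u ∈ Icc 0 ρ ∧ t ∈ solidSimplex n (ρ - u) := by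
  simp only [solidSimplex, mem_ofPred_eq, Fin.forall_fin_succ, Fin.cons_zero, Fin.cons_succ,
    Fin.sum_univ_succ, mem_Icc]
  constructor
  · rintro ⟨⟨hu, ht⟩, hsum⟩
    have := Finset.sum_nonneg fun i (_ : i ∈ Finset.univ) => ht i
    exact ⟨⟨hu, by linarith⟩, ht, by linarith⟩
  · rintro ⟨⟨hu, -⟩, ht, hsum⟩
    exact ⟨⟨hu, ht⟩, by linarith⟩

theorem simplexIntegrand_cons (u : ℝ) (t : Fin n → ℝ) :
    simplexIntegrand (n + 1) (k + 1) ρ x y (Fin.cons u t)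
      = u ^ (x - 1) * simplexIntegrand n k (ρ - u) x y t := by
  simp only [simplexIntegrand, Fin.prod_univ_succ, Finset.sum_filter, Fin.sum_univ_succ,
    Fin.cons_zero, Fin.cons_succ, Fin.val_zero, Fin.val_succ]
  simp only [Nat.zero_lt_succ, if_true, Nat.add_lt_add_iff_right, sub_add_eq_sub_sub]
  ring

theorem simplexLIntegral_succ :
    simplexLIntegral (n + 1) (k + 1) ρ x y
      = ∫⁻ u in Icc 0 ρ, ENNReal.ofReal (u ^ (x - 1)) * simplexLIntegral n k (ρ - u) x y := by
  rw [simplexLIntegral, ← lintegral_indicator measurableSet_solidSimplex,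
    lintegral_fin_succ_eq_lintegral_lintegral_cons
      ((measurable_simplexIntegrand.ennreal_ofReal).indicator measurableSet_solidSimplex),
    ← lintegral_indicator measurableSet_Icc]
  congr 1 with u
  by_cases hu : u ∈ Icc 0 ρ
  · rw [indicator_of_mem hu, simplexLIntegral, ← lintegral_indicator measurableSet_solidSimplex,
      ← lintegral_const_mul' _ _ ENNReal.ofReal_ne_top]
    congr 1 with t
    by_cases ht : t ∈ solidSimplex n (ρ - u)
    · rw [indicator_of_mem (cons_mem_solidSimplex_iff.2 ⟨hu, ht⟩), indicator_of_mem ht,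
        simplexIntegrand_cons, ENNReal.ofReal_mul (rpow_nonneg hu.1 _)]
    · rw [indicator_of_notMem (fun h => ht (cons_mem_solidSimplex_iff.1 h).2),
        indicator_of_notMem ht, mul_zero]
  · rw [indicator_of_notMem hu]
    exact (lintegral_congr fun t =>
      indicator_of_notMem (fun h => hu (cons_mem_solidSimplex_iff.1 h).1) _).trans lintegral_zero

theorem simplexLIntegral_succ_one :
    simplexLIntegral (n + 1) (k + 1) 1 x y
      = (∫⁻ u in Ioo 0 1, ENNReal.ofReal (u ^ (x - 1) * (1 - u) ^ (n * x + y)))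
        * simplexLIntegral n k 1 x y := by
  rw [simplexLIntegral_succ, ← Measure.restrict_congr_set Ioo_ae_eq_Icc,
    ← lintegral_mul_const _ (by fun_prop)]
  refine setLIntegral_congr_fun measurableSet_Ioo fun u hu => ?_
  have hc : 0 < 1 - u := sub_pos.2 hu.2
  rw [← mul_one (1 - u), simplexLIntegral_mul hc, mul_one, ← mul_assoc,
    ← ENNReal.ofReal_mul (rpow_nonneg hu.1.le _)]

end Simplex

theorem stmt6_general (M m : ℕ) (hm1 : 1 ≤ m) (hm : m ≤ M) (x y : ℝ) :
    simplexIntegral M m 1 x y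
      = betaFn x (((M : ℝ) - 1) * x + y + 1) * simplexIntegral (M - 1) (m - 1) 1 x y := by
  obtain ⟨N, rfl⟩ : ∃ N, M = N + 1 := Nat.exists_eq_add_one.2 (hm1.trans hm)
  obtain ⟨k, rfl⟩ : ∃ k, m = k + 1 := Nat.exists_eq_add_one.2 hm1
  have hexp : (((N + 1 : ℕ) : ℝ) - 1) * x + y + 1 - 1 = N * x + y := by push_cast; ring
  rw [Nat.add_sub_cancel, Nat.add_sub_cancel, simplexIntegral_eq_toReal_simplexLIntegral,
    simplexIntegral_eq_toReal_simplexLIntegral, simplexLIntegral_succ_one,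
    betaFn_eq_toReal_lintegral, hexp, ENNReal.toReal_mul]

/-- Recursion `A(M, m, 1, x, y) = B(x, (M-1)x + y + 1) · A(M-1, m-1, 1, x, y)`. -/
theorem stmt6 (M m : ℕ) (hM : 2 ≤ M) (hm1 : 1 ≤ m) (hm : m ≤ M) (x y : ℝ)
    (hx : 0 < x) (hy : 0 ≤ y) :
    simplexIntegral M m 1 x y
      = betaFn x (((M : ℝ) - 1) * x + y + 1) * simplexIntegral (M - 1) (m - 1) 1 x y :=
  stmt6_general M m hm1 hm x y
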